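/- arXiv:1408.0213 — 6 statements merged into one kernel-verified Lean document; each statement's English description precedes it below -/
import Mathlib

section
/- The function I_B(P) = (P/Δ)·log₂(P/Δ) − (p + P/Δ)·log₂(p + P/Δ) − (1−p)·log₂(1−p), defined for 0 ≤ P ≤ Δ(1−p) with p ∈ (0,1) and Δ > 0, is monotonically (strictly) decreasing in P on [0, Δ(1−p)], and satisfies I_B(Δ(1−p)) = 0 and I_B(0) = H_B(p), where H_B(p) = −p·log₂ p − (1−p)·log₂(1−p). -/
open Real

/-- `x log₂ x` with the convention `0 · log 0 = 0`. -/
noncomputable def xlog2 (x : ℝ) : ℝ := if x = 0 then 0 else x * Real.logb 2 x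

/-- The binary privacy-power leakage function
`I_B(P) = (P/Δ)log₂(P/Δ) − (p + P/Δ)log₂(p + P/Δ) − (1−p)log₂(1−p)`,
with the convention `0 · log 0 = 0`. -/
noncomputable def IB (p Δ P : ℝ) : ℝ :=
  xlog2 (P / Δ) - xlog2 (p + P / Δ) - xlog2 (1 - p)

/-- Binary entropy function (in bits). -/
noncomputable def binEnt (p : ℝ) : ℝ := -p * Real.logb 2 p - (1 - p) * Real.logb 2 (1 - p)

open Set

/- For `c > 0` the map `x ↦ x log x − (c + x) log (c + x)` has derivative
`log x − log (c + x) < 0` on `(0, ∞)`, so it is strictly decreasing on `[0, ∞)`; `I_B` is this map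
at `c = p`, precomposed with the increasing rescaling `P ↦ P / Δ`, divided by `log 2` and shifted by
a constant. -/

lemma xlog2_eq_mul_logb (x : ℝ) : xlog2 x = x * logb 2 x := by
  unfold xlog2
  split_ifs with h <;> simp [h]

lemma strictAntiOn_mul_log_sub_mul_log_add {c : ℝ} (hc : 0 < c) :
    StrictAntiOn (fun x => x * log x - (c + x) * log (c + x)) (Ici 0) := by
  have hcont : Continuous fun x => x * log x - (c + x) * log (c + x) :=
    continuous_mul_log.sub (continuous_mul_log.comp (continuous_const.add continuous_id))
  refine strictAntiOn_of_deriv_neg (convex_Ici 0) hcont.continuousOn fun x hx => ?_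
  rw [interior_Ici] at hx
  have hx : 0 < x := hx
  have hcx : 0 < c + x := by linarith
  have hderiv : HasDerivAt (fun x => x * log x - (c + x) * log (c + x))
      ((log x + 1) - (log (c + x) + 1) * 1) x :=
    (hasDerivAt_mul_log hx.ne').sub
      ((hasDerivAt_mul_log hcx.ne').comp x ((hasDerivAt_id x).const_add c))
  rw [hderiv.deriv]
  linarith [log_lt_log hx (by linarith : x < c + x)]

lemma strictAntiOn_xlog2_sub_xlog2_add {c : ℝ} (hc : 0 < c) :
    StrictAntiOn (fun x => xlog2 x - xlog2 (c + x)) (Ici 0) := by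
  intro a ha b hb hab
  have hlog2 : 0 < log 2 := log_pos one_lt_two
  have key := div_lt_div_of_pos_right (strictAntiOn_mul_log_sub_mul_log_add hc ha hb hab) hlog2
  simp only [xlog2_eq_mul_logb, logb]
  convert key using 1 <;> ring

theorem IB_strictAnti_and_endpoints_general
    (p Δ : ℝ) (hp : 0 < p) (hΔ : 0 < Δ) :
    StrictAntiOn (IB p Δ) (Set.Icc 0 (Δ * (1 - p)))
      ∧ IB p Δ (Δ * (1 - p)) = 0
      ∧ IB p Δ 0 = binEnt p := by
  refine ⟨fun a ha b hb hab => ?_, ?_, ?_⟩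
  · have h := strictAntiOn_xlog2_sub_xlog2_add hp (mem_Ici.2 (div_nonneg ha.1 hΔ.le))
      (mem_Ici.2 (div_nonneg hb.1 hΔ.le)) (div_lt_div_of_pos_right hab hΔ)
    simp only [IB]
    linarith
  · simp [IB, mul_div_cancel_left₀ _ hΔ.ne', xlog2]
  · simp only [IB, xlog2_eq_mul_logb, binEnt, zero_div, add_zero, zero_mul]
    ring

/-- For p ∈ (0,1) and Δ > 0, the function I_B(P) is strictly decreasing in P
on [0, Δ(1−p)], satisfies I_B(Δ(1−p)) = 0 and I_B(0) = H_B(p). -/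
theorem IB_strictAnti_and_endpoints
    (p Δ : ℝ) (hp : 0 < p) (hp1 : p < 1) (hΔ : 0 < Δ) :
    StrictAntiOn (IB p Δ) (Set.Icc 0 (Δ * (1 - p)))
      ∧ IB p Δ (Δ * (1 - p)) = 0
      ∧ IB p Δ 0 = binEnt p :=
  IB_strictAnti_and_endpoints_general p Δ hp hΔ
end

section
/- Let X be a discrete random vector taking values in a countable set 𝒳 ⊆ [0,∞)^N, and let (X,Y) be jointly distributed with 0 ≤ Yᵢ ≤ Xᵢ a.s. for each coordinate i. Define Ŷ coordinatewise by Ŷᵢ = min{x ∈ 𝒳ᵢ : x ≥ Yᵢ}, where 𝒳ᵢ is the i-th coordinate projection of 𝒳 (assumed closed under this minimum). Then Ŷ satisfies 0 ≤ Ŷᵢ ≤ Xᵢ a.s., E[Σᵢ (Xᵢ − Ŷᵢ)] ≤ E[Σᵢ (Xᵢ − Yᵢ)], and I(X; Ŷ) ≤ I(X; Y). -/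
open MeasureTheory
open scoped Classical

/-- Kullback–Leibler divergence (in nats), `+∞` unless `μ ≪ ν` and the
log-likelihood ratio is integrable. -/
noncomputable def klDiv {α : Type*} [MeasurableSpace α] (μ ν : Measure α) : ENNReal :=
  if μ ≪ ν ∧ Integrable (llr μ ν) μ then ENNReal.ofReal (∫ x, llr μ ν x ∂μ) else ⊤

/-- Mutual information `I(X;Y)` as KL divergence between joint and product of marginals. -/
noncomputable def mutualInfo {Ω α β : Type*} [MeasurableSpace Ω] [MeasurableSpace α]
    [MeasurableSpace β] (μ : Measure Ω) (X : Ω → α) (Y : Ω → β) : ENNReal :=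
  klDiv (μ.map (fun ω => (X ω, Y ω))) ((μ.map X).prod (μ.map Y))

/-!
Rounding `Y` up to the alphabet is a deterministic measurable map applied to `Y`, so the
inequality for mutual information is the data-processing inequality for the KL divergence
between the joint law of `(X, Y)` and the product of its marginals, pushed forward along
`id × round`. Since `Ŷᵢ` is the least alphabet letter above `Yᵢ` and `Xᵢ` is such a letter,
`Yᵢ ≤ Ŷᵢ ≤ Xᵢ`, which gives the other two claims.
-/

section KullbackLeibler

variable {α β : Type*} [MeasurableSpace α] [MeasurableSpace β]

/-- Mathlib's divergence carries the correction term `ν.real univ - μ.real univ`, which vanishes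
for measures of equal mass. -/
lemma klDiv_eq_klDiv_of_measureReal_univ_eq {μ ν : Measure α} (h : μ.real .univ = ν.real .univ) :
    klDiv μ ν = InformationTheory.klDiv μ ν := by
  by_cases hc : μ ≪ ν ∧ Integrable (llr μ ν) μ
  · rw [klDiv, if_pos hc, InformationTheory.klDiv_of_ac_of_integrable hc.1 hc.2, h,
      add_sub_cancel_right]
  · rw [klDiv, if_neg hc, eq_comm, InformationTheory.klDiv_eq_top_iff]
    exact fun hac hint => hc ⟨hac, hint⟩

lemma klDiv_map_le (μ ν : Measure α) [IsProbabilityMeasure μ] [IsProbabilityMeasure ν]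
    {g : α → β} (hg : Measurable g) :
    klDiv (μ.map g) (ν.map g) ≤ klDiv μ ν := by
  have : IsProbabilityMeasure (μ.map g) := Measure.isProbabilityMeasure_map hg.aemeasurable
  have : IsProbabilityMeasure (ν.map g) := Measure.isProbabilityMeasure_map hg.aemeasurable
  rw [klDiv_eq_klDiv_of_measureReal_univ_eq (by simp),
    klDiv_eq_klDiv_of_measureReal_univ_eq (by simp)]
  exact InformationTheory.klDiv_map_le μ ν hg

end KullbackLeibler

section MutualInfo

variable {Ω α β γ : Type*} [MeasurableSpace Ω] [MeasurableSpace α] [MeasurableSpace β]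
  [MeasurableSpace γ] {μ : Measure Ω}

lemma mutualInfo_congr_ae_right (X : Ω → α) {Y Y' : Ω → β} (h : Y =ᵐ[μ] Y') :
    mutualInfo μ X Y = mutualInfo μ X Y' := by
  have hjoint : (fun ω => (X ω, Y ω)) =ᵐ[μ] fun ω => (X ω, Y' ω) := by
    filter_upwards [h] with ω hω
    rw [hω]
  rw [mutualInfo, mutualInfo, Measure.map_congr hjoint, Measure.map_congr h]

lemma mutualInfo_comp_right_le [IsProbabilityMeasure μ] {X : Ω → α} {Y : Ω → β} {f : β → γ}
    (hX : Measurable X) (hY : Measurable Y) (hf : Measurable f) :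
    mutualInfo μ X (f ∘ Y) ≤ mutualInfo μ X Y := by
  have : IsProbabilityMeasure (μ.map fun ω => (X ω, Y ω)) :=
    Measure.isProbabilityMeasure_map (hX.prodMk hY).aemeasurable
  have : IsProbabilityMeasure (μ.map X) := Measure.isProbabilityMeasure_map hX.aemeasurable
  have : IsProbabilityMeasure (μ.map Y) := Measure.isProbabilityMeasure_map hY.aemeasurable
  have hg : Measurable (Prod.map (id : α → α) f) := measurable_id.prodMap hf
  have hjoint : (μ.map fun ω => (X ω, Y ω)).map (Prod.map id f)
      = μ.map fun ω => (X ω, f (Y ω)) := by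
    rw [Measure.map_map hg (hX.prodMk hY)]
    rfl
  have hmarginals : ((μ.map X).prod (μ.map Y)).map (Prod.map id f)
      = (μ.map X).prod (μ.map (f ∘ Y)) := by
    rw [← Measure.map_prod_map _ _ measurable_id hf, Measure.map_id, Measure.map_map hf hY]
  have key := klDiv_map_le (μ.map fun ω => (X ω, Y ω)) ((μ.map X).prod (μ.map Y)) hg
  rwa [hjoint, hmarginals] at key

end MutualInfo

section RoundUp

open Set

/-- The least element of `T` above `t`; when there is none we return `t` itself (rather than the
junk value `sInf ∅ = 0`), which keeps the map monotone. -/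
noncomputable def roundUp (T : Set ℝ) (t : ℝ) : ℝ :=
  if (T ∩ Ici t).Nonempty then sInf (T ∩ Ici t) else t

variable {T : Set ℝ}

lemma roundUp_eq_of_isLeast {t a : ℝ} (h : IsLeast (T ∩ Ici t) a) : roundUp T t = a := by
  rw [roundUp, if_pos ⟨a, h.1⟩, h.csInf_eq]

lemma roundUp_le {t x : ℝ} (hx : x ∈ T) (htx : t ≤ x) : roundUp T t ≤ x := by
  rw [roundUp, if_pos ⟨x, hx, htx⟩]
  exact csInf_le ⟨t, fun _ hy => hy.2⟩ ⟨hx, htx⟩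

lemma monotone_roundUp (T : Set ℝ) : Monotone (roundUp T) := by
  intro t t' htt'
  by_cases hne' : (T ∩ Ici t').Nonempty
  · rw [roundUp.eq_1 T t', if_pos hne']
    exact le_csInf hne' fun x hx => roundUp_le hx.1 (htt'.trans hx.2)
  · rw [roundUp.eq_1 T t', if_neg hne']
    by_cases hne : (T ∩ Ici t).Nonempty
    · obtain ⟨x, hxT, htx⟩ := hne
      have hxt' : x < t' := not_le.1 fun h => hne' ⟨x, hxT, h⟩
      exact (roundUp_le hxT htx).trans hxt'.le
    · rwa [roundUp, if_neg hne]

lemma measurable_roundUp (T : Set ℝ) : Measurable (roundUp T) :=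
  (monotone_roundUp T).measurable

end RoundUp

theorem output_alphabet_restriction_general
    {Ω : Type*} [MeasurableSpace Ω] (μ : Measure Ω) [IsProbabilityMeasure μ]
    (N : ℕ) (X Y Yhat : Ω → Fin N → ℝ)
    (hX : Measurable X) (hY : Measurable Y)
    (S : Set (Fin N → ℝ)) (hSpos : ∀ v ∈ S, ∀ i, 0 ≤ v i)
    (hXS : ∀ᵐ ω ∂μ, X ω ∈ S)
    (hYX : ∀ᵐ ω ∂μ, ∀ i, Y ω i ≤ X ω i)
    -- Ŷᵢ is the minimum of {x ∈ 𝒳ᵢ : Yᵢ ≤ x}, where 𝒳ᵢ = {v i : v ∈ S}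
    (hYhat : ∀ᵐ ω ∂μ, ∀ i,
      IsLeast {x | x ∈ (fun v : Fin N → ℝ => v i) '' S ∧ Y ω i ≤ x} (Yhat ω i)) :
    (∀ᵐ ω ∂μ, ∀ i, 0 ≤ Yhat ω i ∧ Yhat ω i ≤ X ω i)
    ∧ (∫⁻ ω, ENNReal.ofReal (∑ i, (X ω i - Yhat ω i)) ∂μ
        ≤ ∫⁻ ω, ENNReal.ofReal (∑ i, (X ω i - Y ω i)) ∂μ)
    ∧ mutualInfo μ X Yhat ≤ mutualInfo μ X Y := by
  refine ⟨?_, ?_, ?_⟩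
  · filter_upwards [hYhat, hXS, hYX] with ω hleast hXω hYXω i
    obtain ⟨⟨v, hvS, hvi⟩, -⟩ := (hleast i).1
    exact ⟨hvi ▸ hSpos v hvS i, (hleast i).2 ⟨⟨X ω, hXω, rfl⟩, hYXω i⟩⟩
  · refine lintegral_mono_ae ?_
    filter_upwards [hYhat] with ω hleast
    exact ENNReal.ofReal_le_ofReal
      (Finset.sum_le_sum fun i _ => sub_le_sub_left (hleast i).1.2 _)
  · let round : (Fin N → ℝ) → Fin N → ℝ := fun y i => roundUp ((fun v => v i) '' S) (y i)
    have hround : Measurable round := measurable_pi_lambda _ fun i =>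
      (measurable_roundUp _).comp (measurable_pi_apply i)
    have hYhat_eq : Yhat =ᵐ[μ] round ∘ Y := by
      filter_upwards [hYhat] with ω hleast
      funext i
      exact (roundUp_eq_of_isLeast (hleast i)).symm
    rw [mutualInfo_congr_ae_right X hYhat_eq]
    exact mutualInfo_comp_right_le hX hY hround

/-- Theorem 2 of the paper: Let X be a random vector taking values a.s. in a
countable set S ⊆ [0,∞)^N, and (X,Y) jointly distributed with 0 ≤ Yᵢ ≤ Xᵢ a.s.
Define Ŷ coordinatewise by Ŷᵢ = min{x ∈ 𝒳ᵢ : x ≥ Yᵢ}, where 𝒳ᵢ is the i-th coordinate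
projection of S (the `IsLeast` hypothesis says this minimum exists and Ŷᵢ equals it).
Then 0 ≤ Ŷᵢ ≤ Xᵢ a.s., E[Σᵢ (Xᵢ − Ŷᵢ)] ≤ E[Σᵢ (Xᵢ − Yᵢ)], and I(X; Ŷ) ≤ I(X; Y). -/
theorem output_alphabet_restriction
    {Ω : Type*} [MeasurableSpace Ω] (μ : Measure Ω) [IsProbabilityMeasure μ]
    (N : ℕ) (X Y Yhat : Ω → Fin N → ℝ)
    (hX : Measurable X) (hY : Measurable Y) (hYhatMeas : Measurable Yhat)
    (S : Set (Fin N → ℝ)) (hScount : S.Countable) (hSpos : ∀ v ∈ S, ∀ i, 0 ≤ v i)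
    (hXS : ∀ᵐ ω ∂μ, X ω ∈ S)
    (hYpos : ∀ᵐ ω ∂μ, ∀ i, 0 ≤ Y ω i)
    (hYX : ∀ᵐ ω ∂μ, ∀ i, Y ω i ≤ X ω i)
    -- Ŷᵢ is the minimum of {x ∈ 𝒳ᵢ : Yᵢ ≤ x}, where 𝒳ᵢ = {v i : v ∈ S}
    (hYhat : ∀ᵐ ω ∂μ, ∀ i,
      IsLeast {x | x ∈ (fun v : Fin N → ℝ => v i) '' S ∧ Y ω i ≤ x} (Yhat ω i)) :
    (∀ᵐ ω ∂μ, ∀ i, 0 ≤ Yhat ω i ∧ Yhat ω i ≤ X ω i)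
    ∧ (∫⁻ ω, ENNReal.ofReal (∑ i, (X ω i - Yhat ω i)) ∂μ
        ≤ ∫⁻ ω, ENNReal.ofReal (∑ i, (X ω i - Y ω i)) ∂μ)
    ∧ mutualInfo μ X Yhat ≤ mutualInfo μ X Y :=
  output_alphabet_restriction_general μ N X Y Yhat hX hY S hSpos hXS hYX hYhat
end

section
/- Let X and Y be real-valued random variables with 0 ≤ Y ≤ X a.s., E[X − Y] = P > 0, and suppose X has a density with finite differential entropy h(X) and X − Y has a density. Then I(X;Y) ≥ h(X) − ln(e·P). -/
open MeasureTheory Real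
open scoped Classical

lemma expPDFReal_of_nonneg {r x : ℝ} (hx : 0 ≤ x) :
    ProbabilityTheory.exponentialPDFReal r x = r * Real.exp (-(r * x)) := by
  rw [ProbabilityTheory.exponentialPDFReal, ProbabilityTheory.gammaPDFReal]
  simp [hx]

/-- Shannon lower bound: If 0 ≤ Y ≤ X a.s., E[X − Y] = P > 0, X has a
density fX with finite differential entropy h(X) = ∫ −fX ln fX, and X − Y has a density,
then I(X;Y) ≥ h(X) − ln(e·P). -/
theorem shannon_lower_bound
    {Ω : Type*} [MeasurableSpace Ω] (μ : Measure Ω) [IsProbabilityMeasure μ]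
    (X Y : Ω → ℝ) (hX : Measurable X) (hY : Measurable Y)
    (hYpos : ∀ᵐ ω ∂μ, 0 ≤ Y ω) (hYX : ∀ᵐ ω ∂μ, Y ω ≤ X ω)
    (P : ℝ) (hP : 0 < P) (hmean : ∫ ω, (X ω - Y ω) ∂μ = P)
    (fX : ℝ → ℝ) (hfX_meas : Measurable fX) (hfX_nonneg : ∀ x, 0 ≤ fX x)
    (hfX : μ.map X = volume.withDensity (fun x => ENNReal.ofReal (fX x)))
    (hfX_ent : Integrable (fun x => Real.negMulLog (fX x)))
    (fV : ℝ → ℝ) (hfV_meas : Measurable fV) (hfV_nonneg : ∀ x, 0 ≤ fV x)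
    (hfV : μ.map (fun ω => X ω - Y ω) = volume.withDensity (fun x => ENNReal.ofReal (fV x))) :
    ENNReal.ofReal ((∫ x, Real.negMulLog (fX x)) - Real.log (Real.exp 1 * P))
      ≤ mutualInfo μ X Y := by
  have hPinv : (0:ℝ) < P⁻¹ := inv_pos.mpr hP
  set g : ℝ → ℝ := ProbabilityTheory.exponentialPDFReal P⁻¹ with hg_def
  have hg_meas : Measurable g := ProbabilityTheory.measurable_exponentialPDFReal P⁻¹
  have hg_nonneg : ∀ x, 0 ≤ g x := ProbabilityTheory.exponentialPDFReal_nonneg hPinv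
  have hg_pos : ∀ {x : ℝ}, 0 ≤ x → 0 < g x := by
    intro x hx
    rw [hg_def, expPDFReal_of_nonneg hx]
    positivity
  have hpair : Measurable (fun ω => (X ω, Y ω)) := hX.prodMk hY
  set μJ : Measure (ℝ × ℝ) := μ.map (fun ω => (X ω, Y ω)) with hμJ_def
  set μI : Measure (ℝ × ℝ) := (μ.map X).prod (μ.map Y) with hμI_def
  have : IsProbabilityMeasure μJ := Measure.isProbabilityMeasure_map hpair.aemeasurable
  have : IsProbabilityMeasure (μ.map X) := Measure.isProbabilityMeasure_map hX.aemeasurable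
  have : IsProbabilityMeasure (μ.map Y) := Measure.isProbabilityMeasure_map hY.aemeasurable
  rw [mutualInfo, klDiv]
  split_ifs with h
  swap
  · exact le_top
  obtain ⟨hac, hint⟩ := h
  rw [← hμJ_def, ← hμI_def] at hac hint ⊢
  refine ENNReal.ofReal_le_ofReal ?_
  -- the comparison function F
  set F : ℝ × ℝ → ℝ := fun p => Real.log (g (p.1 - p.2)) - Real.log (fX p.1) with hF_def
  -- integrability of (x,y) ↦ x - y against μJ, and its integral
  have hV_int : Integrable (fun ω => X ω - Y ω) μ := by
    by_contra hc
    rw [integral_undef hc] at hmean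
    exact hP.ne hmean
  have hsub_meas : Measurable (fun p : ℝ × ℝ => p.1 - p.2) :=
    measurable_fst.sub measurable_snd
  have hv_int : Integrable (fun p : ℝ × ℝ => p.1 - p.2) μJ := by
    rw [hμJ_def, integrable_map_measure hsub_meas.aestronglyMeasurable hpair.aemeasurable]
    exact hV_int
  have hv_val : ∫ p, (p.1 - p.2 : ℝ) ∂μJ = P := by
    rw [hμJ_def, integral_map hpair.aemeasurable hsub_meas.aestronglyMeasurable]
    exact hmean
  -- marginal of μJ
  have hfst : μJ.map Prod.fst = μ.map X := by
    rw [hμJ_def, Measure.map_map measurable_fst hpair]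
    rfl
  -- a.e. positivity facts under μJ
  have hae_v : ∀ᵐ p ∂μJ, 0 ≤ p.1 - p.2 := by
    rw [hμJ_def]
    rw [ae_map_iff hpair.aemeasurable (measurableSet_le measurable_const hsub_meas)]
    filter_upwards [hYX] with ω hω
    simpa using hω
  -- log fX ∘ fst : integrability and integral
  have hlogfX_meas : Measurable fun x => Real.log (fX x) := hfX_meas.log
  have hlogfX_int_map : Integrable (fun x => Real.log (fX x)) (μ.map X) := by
    rw [hfX, integrable_withDensity_iff (hfX_meas.ennreal_ofReal)
      (Filter.Eventually.of_forall fun x => ENNReal.ofReal_lt_top)]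
    refine hfX_ent.neg.congr (Filter.Eventually.of_forall fun x => ?_)
    simp only [Pi.neg_apply, ENNReal.toReal_ofReal (hfX_nonneg x), Real.negMulLog]
    ring
  have hlogfX_val_map : ∫ x, Real.log (fX x) ∂(μ.map X) = -∫ x, Real.negMulLog (fX x) := by
    rw [hfX]
    have : (fun x => ENNReal.ofReal (fX x))
        = fun x => ((Real.toNNReal (fX x) : NNReal) : ENNReal) := rfl
    rw [this, integral_withDensity_eq_integral_smul hfX_meas.real_toNNReal
      (fun x => Real.log (fX x))]
    rw [← integral_neg]
    congr 1
    ext x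
    rw [NNReal.smul_def, smul_eq_mul, Real.coe_toNNReal _ (hfX_nonneg x)]
    simp only [Pi.neg_apply, Real.negMulLog]
    ring
  have hlogfX_int : Integrable (fun p : ℝ × ℝ => Real.log (fX p.1)) μJ := by
    have := hlogfX_int_map
    rw [← hfst, integrable_map_measure hlogfX_meas.aestronglyMeasurable
      measurable_fst.aemeasurable] at this
    exact this
  have hlogfX_val : ∫ p, Real.log (fX p.1) ∂μJ = -∫ x, Real.negMulLog (fX x) := by
    rw [← hlogfX_val_map, ← hfst,
      integral_map measurable_fst.aemeasurable hlogfX_meas.aestronglyMeasurable]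
  -- the first part of F is a.e. equal to an affine function
  have hlin_eq : (fun p : ℝ × ℝ => -Real.log P - P⁻¹ * (p.1 - p.2))
      =ᵐ[μJ] fun p => Real.log (g (p.1 - p.2)) := by
    filter_upwards [hae_v] with p hp
    rw [hg_def, expPDFReal_of_nonneg hp, Real.log_mul hPinv.ne' (Real.exp_ne_zero _),
      Real.log_exp, Real.log_inv]
    ring
  have hlin_int : Integrable (fun p : ℝ × ℝ => -Real.log P - P⁻¹ * (p.1 - p.2)) μJ :=
    (integrable_const _).sub (hv_int.const_mul _)
  have hF1_int : Integrable (fun p : ℝ × ℝ => Real.log (g (p.1 - p.2))) μJ :=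
    hlin_int.congr hlin_eq
  have hF_int : Integrable F μJ := hF1_int.sub hlogfX_int
  have hF_val : ∫ p, F p ∂μJ = (∫ x, Real.negMulLog (fX x)) - Real.log (Real.exp 1 * P) := by
    rw [hF_def, integral_sub hF1_int hlogfX_int, hlogfX_val,
      ← integral_congr_ae hlin_eq, integral_sub (integrable_const _) (hv_int.const_mul _),
      integral_const, integral_const_mul, hv_val,
      Real.log_mul (Real.exp_ne_zero 1) hP.ne', Real.log_exp]
    have : IsProbabilityMeasure μJ := by infer_instance
    simp [measure_univ, inv_mul_cancel₀ hP.ne']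
    ring
  -- now the main inequality :  ∫ F dμJ ≤ ∫ llr dμJ
  have main : ∫ p, F p ∂μJ ≤ ∫ p, llr μJ μI p ∂μJ := by
    set r : ℝ × ℝ → ENNReal := μJ.rnDeriv μI with hr_def
    have hr_meas : Measurable r := Measure.measurable_rnDeriv _ _
    have hr_lt : ∀ᵐ p ∂μI, r p < ⊤ := Measure.rnDeriv_lt_top _ _
    set s : ℝ × ℝ → ℝ := fun p => if fX p.1 = 0 then 0 else g (p.1 - p.2) / fX p.1 with hs_def
    have hs_meas : Measurable s := by
      refine Measurable.ite ?_ measurable_const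
        ((hg_meas.comp hsub_meas).div (hfX_meas.comp measurable_fst))
      exact (hfX_meas.comp measurable_fst) (measurableSet_singleton 0)
    have hs_nonneg : ∀ p, 0 ≤ s p := by
      intro p
      rw [hs_def]
      dsimp only
      split_ifs with h
      · exact le_refl _
      · exact div_nonneg (hg_nonneg _) (hfX_nonneg _)
    -- the total mass of s against μI is at most 1
    have hinner_meas : Measurable fun x : ℝ => ∫⁻ y, ENNReal.ofReal (s (x, y)) ∂(μ.map Y) :=
      Measurable.lintegral_prod_right hs_meas.ennreal_ofReal
    have hs_lint : ∫⁻ p, ENNReal.ofReal (s p) ∂μI ≤ 1 := by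
      have key1 : ∫⁻ p, ENNReal.ofReal (s p) ∂μI
          = ∫⁻ x, ∫⁻ y, ENNReal.ofReal (s (x, y)) ∂(μ.map Y) ∂(μ.map X) :=
        lintegral_prod _ hs_meas.ennreal_ofReal.aemeasurable
      have key2 : ∫⁻ x, (∫⁻ y, ENNReal.ofReal (s (x, y)) ∂(μ.map Y)) ∂(μ.map X)
          = ∫⁻ x, ENNReal.ofReal (fX x)
              * (∫⁻ y, ENNReal.ofReal (s (x, y)) ∂(μ.map Y)) ∂volume := by
        rw [hfX, lintegral_withDensity_eq_lintegral_mul _ hfX_meas.ennreal_ofReal hinner_meas]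
        rfl
      have hptwise : ∀ x y : ℝ, ENNReal.ofReal (fX x) * ENNReal.ofReal (s (x, y))
          ≤ ENNReal.ofReal (g (x - y)) := by
        intro x y
        rw [← ENNReal.ofReal_mul (hfX_nonneg x)]
        refine ENNReal.ofReal_le_ofReal ?_
        by_cases hx : fX x = 0
        · simp [hs_def, hx, hg_nonneg]
        · rw [hs_def]
          dsimp only
          rw [if_neg hx, mul_comm, div_mul_cancel₀ _ hx]
      have key3 : ∫⁻ x, ENNReal.ofReal (fX x)
              * (∫⁻ y, ENNReal.ofReal (s (x, y)) ∂(μ.map Y)) ∂volume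
          ≤ ∫⁻ x, ∫⁻ y, ENNReal.ofReal (g (x - y)) ∂(μ.map Y) ∂volume := by
        refine lintegral_mono fun x => ?_
        rw [← lintegral_const_mul _ (show Measurable fun y : ℝ => ENNReal.ofReal (s (x, y)) from hs_meas.ennreal_ofReal.comp measurable_prodMk_left)]
        exact lintegral_mono fun y => hptwise x y
      have key4 : ∫⁻ x, ∫⁻ y, ENNReal.ofReal (g (x - y)) ∂(μ.map Y) ∂volume
          = ∫⁻ y, ∫⁻ x, ENNReal.ofReal (g (x - y)) ∂volume ∂(μ.map Y) :=
        lintegral_lintegral_swap (hg_meas.comp hsub_meas).ennreal_ofReal.aemeasurable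
      have key5 : ∀ y : ℝ, ∫⁻ x, ENNReal.ofReal (g (x - y)) ∂volume = 1 := by
        intro y
        have hmp := (measurePreserving_sub_right (volume : Measure ℝ) y).lintegral_comp
          hg_meas.ennreal_ofReal
        calc ∫⁻ x, ENNReal.ofReal (g (x - y)) ∂volume
            = ∫⁻ x, ENNReal.ofReal (g x) ∂volume := hmp
          _ = ∫⁻ x, ProbabilityTheory.exponentialPDF P⁻¹ x ∂volume := rfl
          _ = 1 := ProbabilityTheory.lintegral_exponentialPDF_eq_one hPinv
      calc ∫⁻ p, ENNReal.ofReal (s p) ∂μI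
          = ∫⁻ x, ∫⁻ y, ENNReal.ofReal (s (x, y)) ∂(μ.map Y) ∂(μ.map X) := key1
        _ = ∫⁻ x, ENNReal.ofReal (fX x)
              * (∫⁻ y, ENNReal.ofReal (s (x, y)) ∂(μ.map Y)) ∂volume := key2
        _ ≤ ∫⁻ x, ∫⁻ y, ENNReal.ofReal (g (x - y)) ∂(μ.map Y) ∂volume := key3
        _ = ∫⁻ y, ∫⁻ x, ENNReal.ofReal (g (x - y)) ∂volume ∂(μ.map Y) := key4
        _ = ∫⁻ y, 1 ∂(μ.map Y) := by
              refine lintegral_congr fun y => key5 y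
        _ = 1 := by simp [measure_univ]
    have hs_int : Integrable s μI := by
      refine ⟨hs_meas.aestronglyMeasurable, ?_⟩
      rw [hasFiniteIntegral_iff_ofReal (Filter.Eventually.of_forall hs_nonneg)]
      exact lt_of_le_of_lt hs_lint ENNReal.one_lt_top
    have hs_val : ∫ p, s p ∂μI ≤ 1 := by
      rw [integral_eq_lintegral_of_nonneg_ae (Filter.Eventually.of_forall hs_nonneg)
        hs_meas.aestronglyMeasurable]
      calc (∫⁻ p, ENNReal.ofReal (s p) ∂μI).toReal
          ≤ (1 : ENNReal).toReal := ENNReal.toReal_mono ENNReal.one_ne_top hs_lint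
        _ = 1 := by simp
    -- r vanishes a.e. on the bad set
    have hA1 : MeasurableSet {p : ℝ × ℝ | fX p.1 = 0} :=
      (hfX_meas.comp measurable_fst) (measurableSet_singleton 0)
    have hA2 : MeasurableSet {p : ℝ × ℝ | p.1 - p.2 < 0} :=
      measurableSet_lt hsub_meas measurable_const
    have hA_meas : MeasurableSet ({p : ℝ × ℝ | fX p.1 = 0} ∪ {p | p.1 - p.2 < 0}) :=
      hA1.union hA2
    have hπA : μJ ({p : ℝ × ℝ | fX p.1 = 0} ∪ {p | p.1 - p.2 < 0}) = 0 := by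
      refine le_antisymm (le_trans (measure_union_le _ _) ?_) zero_le
      have hB : MeasurableSet {x : ℝ | fX x = 0} := hfX_meas (measurableSet_singleton 0)
      have h1 : μJ {p : ℝ × ℝ | fX p.1 = 0} = 0 := by
        have hmapX : (μ.map X) {x | fX x = 0} = 0 := by
          rw [hfX, withDensity_apply _ hB]
          have hz : ∀ᵐ x ∂(volume.restrict {x : ℝ | fX x = 0}), ENNReal.ofReal (fX x) = 0 := by
            refine (ae_restrict_iff' hB).2 (Filter.Eventually.of_forall fun x hx => ?_)
            simp only [Set.mem_setOf_eq] at hx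
            simp [hx]
          rw [lintegral_congr_ae hz, lintegral_zero]
        calc μJ {p : ℝ × ℝ | fX p.1 = 0}
            = (μJ.map Prod.fst) {x | fX x = 0} := by
              rw [Measure.map_apply measurable_fst hB]; rfl
          _ = 0 := by rw [hfst]; exact hmapX
      have h2 : μJ {p : ℝ × ℝ | p.1 - p.2 < 0} = 0 := by
        rw [hμJ_def, Measure.map_apply hpair hA2]
        have hset : (fun ω => (X ω, Y ω)) ⁻¹' {p : ℝ × ℝ | p.1 - p.2 < 0}
            = {ω | ¬ Y ω ≤ X ω} := by
          ext ω
          simp [Set.mem_preimage, Set.mem_setOf_eq, sub_neg, not_le]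
        rw [hset]
        exact ae_iff.mp hYX
      rw [h1, h2]
      simp
    have hr0 : ∀ᵐ p ∂μI, p ∈ ({p : ℝ × ℝ | fX p.1 = 0} ∪ {p | p.1 - p.2 < 0}) → r p = 0 := by
      have h0 : ∫⁻ p in ({p : ℝ × ℝ | fX p.1 = 0} ∪ {p | p.1 - p.2 < 0}), r p ∂μI = 0 := by
        rw [← withDensity_apply _ hA_meas, Measure.withDensity_rnDeriv_eq _ _ hac]
        exact hπA
      exact (setLIntegral_eq_zero_iff hA_meas hr_meas).mp h0
    -- the pointwise Gibbs inequality
    have hB2 : ∀ᵐ p ∂μI, (r p).toReal - s p ≤ (r p).toReal • (llr μJ μI p - F p) := by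
      filter_upwards [hr0, hr_lt] with p h0 hlt
      by_cases hrp : r p = 0
      · rw [hrp]
        simp [hs_nonneg p]
      · have hfx : fX p.1 ≠ 0 := by
          intro h
          exact hrp (h0 (Or.inl h))
        have hv : 0 ≤ p.1 - p.2 := by
          by_contra h
          exact hrp (h0 (Or.inr (not_le.mp h)))
        have hfxpos : 0 < fX p.1 := lt_of_le_of_ne (hfX_nonneg _) (Ne.symm hfx)
        have hgp : 0 < g (p.1 - p.2) := hg_pos hv
        have hsp : s p = g (p.1 - p.2) / fX p.1 := by
          rw [hs_def]
          dsimp only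
          rw [if_neg hfx]
        have hspos : 0 < s p := by
          rw [hsp]
          positivity
        have ha : 0 < (r p).toReal := ENNReal.toReal_pos hrp hlt.ne
        have hFp : F p = Real.log (s p) := by
          rw [hF_def, hsp, Real.log_div hgp.ne' hfx]
        have hllr : llr μJ μI p = Real.log ((r p).toReal) := rfl
        rw [hllr, hFp, smul_eq_mul]
        have key := Real.log_le_sub_one_of_pos (div_pos hspos ha)
        rw [Real.log_div hspos.ne' ha.ne'] at key
        have hdiv : (r p).toReal * (s p / (r p).toReal) = s p := by
          field_simp
        nlinarith [mul_le_mul_of_nonneg_left key ha.le, hdiv]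
    -- put everything together
    have htrans : ∫ p, (r p).toReal • (llr μJ μI p - F p) ∂μI
        = ∫ p, (llr μJ μI p - F p) ∂μJ := integral_rnDeriv_smul hac
    have hrhs_int : Integrable (fun p => (r p).toReal • (llr μJ μI p - F p)) μI :=
      (integrable_rnDeriv_smul_iff hac).mpr (hint.sub hF_int)
    have hlhs_int : Integrable (fun p => (r p).toReal - s p) μI :=
      Measure.integrable_toReal_rnDeriv.sub hs_int
    have hmono := integral_mono_ae hlhs_int hrhs_int hB2
    rw [htrans] at hmono
    have h1 : ∫ p, ((r p).toReal - s p) ∂μI = 1 - ∫ p, s p ∂μI := by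
      rw [integral_sub Measure.integrable_toReal_rnDeriv hs_int,
        Measure.integral_toReal_rnDeriv hac]
      simp [measure_univ]
    rw [h1] at hmono
    have h2 : (0:ℝ) ≤ ∫ p, (llr μJ μI p - F p) ∂μJ := le_trans (by linarith) hmono
    rw [integral_sub hint hF_int] at h2
    linarith
  calc (∫ x, Real.negMulLog (fX x)) - Real.log (Real.exp 1 * P)
      = ∫ p, F p ∂μJ := hF_val.symm
    _ ≤ ∫ p, llr μJ μI p ∂μJ := main
end

section
/- Let X ~ Exp(λ) (mean λ) and, for 0 < P ≤ λ, let Y be defined via the joint construction Y = X − V where V ~ Exp(P) (mean P) is independent of Y, and Y has distribution f_Y(y) = (1 − P/λ)·(1/λ)e^{−y/λ} + (P/λ)·δ(y) on [0,∞). Then the resulting pair (X,Y) satisfies: (i) 0 ≤ Y ≤ X a.s., (ii) E[X − Y] = P, (iii) X ~ Exp(λ), and (iv) I(X;Y) = ln(λ/P). -/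
open MeasureTheory Real ProbabilityTheory
open scoped Classical

/-!
In terms of the rates `a = 1/λ ≤ b = 1/P`, the characteristic function of `X = Y + V` is
`(a/b + (1 - a/b) · a/(a - it)) · b/(b - it) = a/(a - it)`, so `X ~ Exp(a)`. Given `Y = y ≥ 0`,
`X` is `Exp(b)` shifted by `y`, so the law of `(X, Y)` has density
`f(x, y) = p_b(x - y) / p_a(x)` with respect to `Exp(a) ⊗ law(Y)`, where `p_r` is the `Exp(r)`
density. On the support `0 ≤ Y ≤ X` one has `log f(X, Y) = log(b/a) + aX - bV`, whose mean is
`log(b/a) + 1 - 1`.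
-/

open Set Complex
open scoped ENNReal

section Exponential

lemma expMeasure_eq_withDensity (r : ℝ) : expMeasure r = volume.withDensity (exponentialPDF r) :=
  rfl

@[fun_prop]
lemma measurable_exponentialPDF (r : ℝ) : Measurable (exponentialPDF r) :=
  (measurable_exponentialPDFReal r).ennreal_ofReal

lemma ae_nonneg_expMeasure (r : ℝ) : ∀ᵐ x ∂expMeasure r, 0 ≤ x := by
  rw [expMeasure_eq_withDensity, ae_withDensity_iff (measurable_exponentialPDF r)]
  filter_upwards with x hx
  by_contra hneg
  exact hx (exponentialPDF_of_neg (not_le.mp hneg))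

lemma toReal_exponentialPDF {r : ℝ} (hr : 0 ≤ r) (x : ℝ) :
    (exponentialPDF r x).toReal = (Ici 0).indicator (fun x => r * Real.exp (-(r * x))) x := by
  rw [exponentialPDF_eq, indicator, ENNReal.toReal_ofReal (by split_ifs <;> positivity)]
  rfl

variable {E : Type*} [NormedAddCommGroup E] [NormedSpace ℝ E]

lemma integral_expMeasure {r : ℝ} (hr : 0 ≤ r) (g : ℝ → E) :
    ∫ x, g x ∂expMeasure r = ∫ x in Ioi 0, (r * Real.exp (-(r * x))) • g x := by
  rw [expMeasure_eq_withDensity, integral_withDensity_eq_integral_toReal_smul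
    (measurable_exponentialPDF r) (ae_of_all _ fun _ => ENNReal.ofReal_lt_top),
    ← integral_Ici_eq_integral_Ioi, ← integral_indicator measurableSet_Ici]
  simp_rw [toReal_exponentialPDF hr, indicator_smul_apply_left]

lemma integrable_expMeasure_iff {r : ℝ} (hr : 0 ≤ r) {g : ℝ → E} :
    Integrable g (expMeasure r) ↔
      IntegrableOn (fun x => (r * Real.exp (-(r * x))) • g x) (Ioi 0) := by
  rw [expMeasure_eq_withDensity, integrable_withDensity_iff_integrable_smul'
    (measurable_exponentialPDF r) (ae_of_all _ fun _ => ENNReal.ofReal_lt_top),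
    ← integrableOn_Ici_iff_integrableOn_Ioi, ← integrable_indicator_iff measurableSet_Ici]
  simp_rw [toReal_exponentialPDF hr, ← indicator_smul_apply_left]

lemma ofReal_sub_mul_I_ne_zero {r : ℝ} (hr : r ≠ 0) (t : ℝ) : (r : ℂ) - t * I ≠ 0 :=
  fun h => by simpa [hr] using congrArg Complex.re h

lemma charFun_expMeasure {r : ℝ} (hr : 0 < r) (t : ℝ) :
    charFun (expMeasure r) t = r / (r - t * I) := by
  have hexp (x : ℝ) :
      (r * Real.exp (-(r * x))) • cexp (t * x * I) = r * cexp ((-r + t * I) * x) := by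
    rw [Complex.real_smul, Complex.ofReal_mul, Complex.ofReal_exp, mul_assoc, ← Complex.exp_add]
    push_cast
    ring_nf
  have hre : (-r + t * I).re < 0 := by simpa using hr
  have := ofReal_sub_mul_I_ne_zero hr.ne' t
  rw [charFun_apply_real, integral_expMeasure hr.le]
  simp_rw [hexp]
  rw [integral_const_mul, integral_exp_mul_complex_Ioi hre, Complex.ofReal_zero, mul_zero,
    Complex.exp_zero, show -(r : ℂ) + t * I = -(r - t * I) by ring]
  field_simp

lemma integrable_id_expMeasure {r : ℝ} (hr : 0 < r) : Integrable id (expMeasure r) := by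
  rw [integrable_expMeasure_iff hr.le]
  have := integrableOn_rpow_mul_exp_neg_mul_rpow (s := 1) (p := 1) (by norm_num) one_pos hr
  refine IntegrableOn.congr_fun (this.const_mul r) (fun x _ => ?_) measurableSet_Ioi
  simp only [Real.rpow_one, id, smul_eq_mul, neg_mul]
  ring

lemma integral_id_expMeasure {r : ℝ} (hr : 0 < r) : ∫ x, x ∂expMeasure r = 1 / r := by
  have hmean : ∫ x in Ioi 0, x * Real.exp (-(r * x)) = 1 / r ^ 2 := by
    simpa [show (2 : ℝ) - 1 = 1 by norm_num] using integral_rpow_mul_exp_neg_mul_Ioi two_pos hr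
  have hx (x : ℝ) : (r * Real.exp (-(r * x))) • x = r * (x * Real.exp (-(r * x))) := by
    rw [smul_eq_mul]; ring
  simp_rw [integral_expMeasure hr.le, hx, integral_const_mul, hmean]
  field_simp

end Exponential

lemma withDensity_map_add_left {G : Type*} [MeasurableSpace G] [AddGroup G] [MeasurableAdd G]
    (μ : Measure G) [μ.IsAddLeftInvariant] (f : G → ℝ≥0∞) (y : G) :
    (μ.withDensity f).map (y + ·) = μ.withDensity (fun x => f (-y + x)) := by
  ext s hs
  rw [Measure.map_apply (measurable_const_add y) hs,
    withDensity_apply _ (measurable_const_add y hs), withDensity_apply _ hs,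
    ← (measurePreserving_add_left μ y).setLIntegral_comp_preimage_emb
      (MeasurableEquiv.addLeft y).measurableEmbedding (fun x => f (-y + x)) s]
  simp only [neg_add_cancel_left]

lemma map_add_prod_eq_withDensity {G : Type*} [MeasurableSpace G] [Add G] [MeasurableAdd₂ G]
    {ρ ν σ : Measure G} [SFinite ρ] [SFinite ν] [SFinite σ] {f : G × G → ℝ≥0∞}
    (hf : Measurable f) (h : ∀ᵐ y ∂ρ, ν.map (y + ·) = σ.withDensity (fun x => f (x, y))) :
    (ρ.prod ν).map (fun p => (p.1 + p.2, p.1)) = (σ.prod ρ).withDensity f := by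
  have hT : Measurable (fun p : G × G => (p.1 + p.2, p.1)) := by fun_prop
  ext S hS
  rw [Measure.map_apply hT hS, Measure.prod_apply (hT hS), withDensity_apply _ hS,
    ← lintegral_indicator hS, lintegral_prod_symm _ (hf.indicator hS).aemeasurable]
  refine lintegral_congr_ae (h.mono fun y hy => ?_)
  have hSy : MeasurableSet {x | (x, y) ∈ S} := measurable_prodMk_right hS
  calc ν (Prod.mk y ⁻¹' ((fun p : G × G => (p.1 + p.2, p.1)) ⁻¹' S))
      = ν.map (y + ·) {x | (x, y) ∈ S} := by
        rw [Measure.map_apply (by fun_prop) hSy]; rfl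
    _ = ∫⁻ x in {x | (x, y) ∈ S}, f (x, y) ∂σ := by rw [hy, withDensity_apply _ hSy]
    _ = ∫⁻ x, S.indicator f (x, y) ∂σ := (lintegral_indicator hSy _).symm

section CharFun

variable {E : Type*} [NormedAddCommGroup E] [InnerProductSpace ℝ E] [MeasurableSpace E]

lemma charFun_add_measure [OpensMeasurableSpace E] (μ ν : Measure E) [IsFiniteMeasure μ]
    [IsFiniteMeasure ν] (t : E) :
    charFun (μ + ν) t = charFun μ t + charFun ν t := by
  simp_rw [charFun_eq_integral_innerProbChar]
  exact integral_add_measure (BoundedContinuousFunction.integrable μ _)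
    (BoundedContinuousFunction.integrable ν _)

lemma charFun_smul_measure (c : ℝ≥0∞) (μ : Measure E) (t : E) :
    charFun (c • μ) t = c.toReal • charFun μ t :=
  integral_smul_measure _ c

end CharFun

noncomputable def expMixture (a b : ℝ) : Measure ℝ :=
  ENNReal.ofReal (a / b) • Measure.dirac 0 + ENNReal.ofReal (1 - a / b) • expMeasure a

lemma ae_nonneg_expMixture (a b : ℝ) : ∀ᵐ y ∂expMixture a b, 0 ≤ y := by
  rw [expMixture, ae_add_measure_iff]
  exact ⟨Measure.ae_smul_measure (ae_dirac_iff measurableSet_Ici |>.mpr le_rfl) _,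
    Measure.ae_smul_measure (ae_nonneg_expMeasure a) _⟩

lemma charFun_expMixture_mul_charFun_expMeasure {a b : ℝ} (ha : 0 < a) (hab : a ≤ b) (t : ℝ) :
    charFun (expMixture a b) t * charFun (expMeasure b) t = charFun (expMeasure a) t := by
  have hb : 0 < b := ha.trans_le hab
  have := isProbabilityMeasure_expMeasure ha
  have := (expMeasure a).smul_finite (ENNReal.ofReal_ne_top (r := 1 - a / b))
  have := (Measure.dirac (0 : ℝ)).smul_finite (ENNReal.ofReal_ne_top (r := a / b))
  rw [expMixture, charFun_add_measure, charFun_smul_measure, charFun_smul_measure, charFun_dirac,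
    charFun_expMeasure ha, charFun_expMeasure hb, ENNReal.toReal_ofReal (by positivity),
    ENNReal.toReal_ofReal (sub_nonneg.mpr ((div_le_one hb).mpr hab))]
  have := ofReal_sub_mul_I_ne_zero ha.ne' t
  have := ofReal_sub_mul_I_ne_zero hb.ne' t
  have : (b : ℂ) ≠ 0 := by exact_mod_cast hb.ne'
  simp only [inner_zero_left, Complex.ofReal_zero, zero_mul, Complex.exp_zero, Complex.real_smul]
  push_cast
  field_simp
  ring

lemma exponentialPDF_mul_div_exponentialPDF {a : ℝ} (ha : 0 < a) (b : ℝ) {y : ℝ}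
    (hy : 0 ≤ y) (x : ℝ) :
    exponentialPDF a x * (exponentialPDF b (x - y) / exponentialPDF a x)
      = exponentialPDF b (x - y) := by
  rcases lt_or_ge x 0 with hx | hx
  · rw [exponentialPDF_of_neg (by linarith : x - y < 0), ENNReal.zero_div, mul_zero]
  · refine ENNReal.mul_div_cancel ?_ ENNReal.ofReal_ne_top
    rw [exponentialPDF_of_nonneg hx, ENNReal.ofReal_ne_zero_iff]
    positivity

lemma map_const_add_expMeasure {a b y : ℝ} (ha : 0 < a) (hy : 0 ≤ y) :
    (expMeasure b).map (y + ·)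
      = (expMeasure a).withDensity (fun x => exponentialPDF b (x - y) / exponentialPDF a x) := by
  rw [expMeasure_eq_withDensity, withDensity_map_add_left, expMeasure_eq_withDensity,
    ← withDensity_mul _ (measurable_exponentialPDF a) (by fun_prop)]
  congr with x
  rw [Pi.mul_apply, exponentialPDF_mul_div_exponentialPDF ha b hy, neg_add_eq_sub]

lemma log_toReal_exponentialPDF_div {a b x y : ℝ} (ha : 0 < a) (hb : 0 < b) (hy : 0 ≤ y)
    (hyx : y ≤ x) : Real.log (exponentialPDF b (x - y) / exponentialPDF a x).toReal
      = Real.log (b / a) + a * x - b * (x - y) := by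
  rw [ENNReal.toReal_div, exponentialPDF_of_nonneg (sub_nonneg.mpr hyx),
    exponentialPDF_of_nonneg (hy.trans hyx), ENNReal.toReal_ofReal (by positivity),
    ENNReal.toReal_ofReal (by positivity), Real.log_div (by positivity) (by positivity),
    Real.log_mul hb.ne' (Real.exp_ne_zero _), Real.log_mul ha.ne' (Real.exp_ne_zero _),
    Real.log_exp, Real.log_exp, Real.log_div hb.ne' ha.ne']
  ring

lemma klDiv_withDensity {α : Type*} [MeasurableSpace α] {ν : Measure α} [SigmaFinite ν]
    {f : α → ℝ≥0∞} (hf : Measurable f)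
    (hint : Integrable (fun x => Real.log (f x).toReal) (ν.withDensity f)) :
    klDiv (ν.withDensity f) ν
      = ENNReal.ofReal (∫ x, Real.log (f x).toReal ∂ν.withDensity f) := by
  have hac := withDensity_absolutelyContinuous ν f
  have hllr : llr (ν.withDensity f) ν =ᵐ[ν.withDensity f] fun x => Real.log (f x).toReal := by
    filter_upwards [hac.ae_le (Measure.rnDeriv_withDensity ν hf)] with x hx
    rw [llr, hx]
  rw [klDiv, if_pos ⟨hac, hint.congr hllr.symm⟩, integral_congr_ae hllr]

section Construction

variable {Ω : Type*} [MeasurableSpace Ω] {μ : Measure Ω} {X Y V : Ω → ℝ}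

lemma integrable_of_map_eq_expMeasure {r : ℝ} (hr : 0 < r) (hX : AEMeasurable X μ)
    (hlaw : μ.map X = expMeasure r) : Integrable X μ :=
  (integrable_map_measure aestronglyMeasurable_id hX).mp (hlaw ▸ integrable_id_expMeasure hr)

lemma integral_of_map_eq_expMeasure {r : ℝ} (hr : 0 < r) (hX : AEMeasurable X μ)
    (hlaw : μ.map X = expMeasure r) : ∫ ω, X ω ∂μ = 1 / r := by
  rw [← integral_id_expMeasure hr, ← hlaw]
  exact (integral_map (f := fun x => x) hX aestronglyMeasurable_id).symm

variable [IsProbabilityMeasure μ]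

lemma map_add_eq_expMeasure {a b : ℝ} (ha : 0 < a) (hab : a ≤ b) (hY : Measurable Y)
    (hV : Measurable V) (hind : IndepFun Y V μ) (hYlaw : μ.map Y = expMixture a b)
    (hVlaw : μ.map V = expMeasure b) : μ.map (fun ω => Y ω + V ω) = expMeasure a := by
  have := isProbabilityMeasure_expMeasure ha
  refine Measure.ext_of_charFun (funext fun t => ?_)
  rw [hind.charFun_map_fun_add_eq_mul hY.aemeasurable hV.aemeasurable, Pi.mul_apply, hYlaw, hVlaw,
    charFun_expMixture_mul_charFun_expMeasure ha hab]

lemma map_add_prod_eq_withDensity_expMeasure {a b : ℝ} (ha : 0 < a) (hY : Measurable Y)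
    (hV : Measurable V) (hind : IndepFun Y V μ) (hY0 : ∀ᵐ y ∂μ.map Y, 0 ≤ y)
    (hVlaw : μ.map V = expMeasure b) :
    μ.map (fun ω => (Y ω + V ω, Y ω)) = ((expMeasure a).prod (μ.map Y)).withDensity
      (fun p => exponentialPDF b (p.1 - p.2) / exponentialPDF a p.1) := by
  have := Measure.isProbabilityMeasure_map (μ := μ) hY.aemeasurable
  have := isProbabilityMeasure_expMeasure ha
  have : IsProbabilityMeasure (expMeasure b) :=
    hVlaw ▸ Measure.isProbabilityMeasure_map hV.aemeasurable
  calc μ.map (fun ω => (Y ω + V ω, Y ω))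
      = (μ.map (fun ω => (Y ω, V ω))).map (fun p => (p.1 + p.2, p.1)) := by
        rw [Measure.map_map (by fun_prop) (hY.prodMk hV)]; rfl
    _ = ((μ.map Y).prod (expMeasure b)).map (fun p => (p.1 + p.2, p.1)) := by
        rw [(indepFun_iff_map_prod_eq_prod_map_map hY.aemeasurable hV.aemeasurable).mp hind, hVlaw]
    _ = _ := by
        refine map_add_prod_eq_withDensity ?_ (hY0.mono fun y hy => map_const_add_expMeasure ha hy)
        fun_prop

lemma mutualInfo_add_eq_log {a b : ℝ} (ha : 0 < a) (hb : 0 < b) (hY : Measurable Y)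
    (hV : Measurable V) (hind : IndepFun Y V μ) (hY0 : ∀ᵐ y ∂μ.map Y, 0 ≤ y)
    (hXlaw : μ.map (fun ω => Y ω + V ω) = expMeasure a) (hVlaw : μ.map V = expMeasure b) :
    mutualInfo μ (fun ω => Y ω + V ω) Y = ENNReal.ofReal (Real.log (b / a)) := by
  have := Measure.isProbabilityMeasure_map (μ := μ) hY.aemeasurable
  have := isProbabilityMeasure_expMeasure ha
  set f : ℝ × ℝ → ℝ≥0∞ := fun p => exponentialPDF b (p.1 - p.2) / exponentialPDF a p.1
  have hjoint := map_add_prod_eq_withDensity_expMeasure ha hY hV hind hY0 hVlaw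
  have hXY : Measurable (fun ω => (Y ω + V ω, Y ω)) := by fun_prop
  have hlogf : Measurable (fun p => Real.log (f p).toReal) := by fun_prop
  have hlog : (fun ω => Real.log (f (Y ω + V ω, Y ω)).toReal)
      =ᵐ[μ] fun ω => Real.log (b / a) + a * (Y ω + V ω) - b * V ω := by
    filter_upwards [ae_of_ae_map hY.aemeasurable hY0,
      ae_of_ae_map hV.aemeasurable (hVlaw ▸ ae_nonneg_expMeasure b)] with ω hy hv
    rw [log_toReal_exponentialPDF_div ha hb hy (by linarith), add_sub_cancel_left]
  have hXint := integrable_of_map_eq_expMeasure ha (by fun_prop) hXlaw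
  have hVint := integrable_of_map_eq_expMeasure hb hV.aemeasurable hVlaw
  have hXint' : Integrable (fun ω => Real.log (b / a) + a * (Y ω + V ω)) μ :=
    (integrable_const _).add (hXint.const_mul a)
  have hmean :
      ∫ ω, (Real.log (b / a) + a * (Y ω + V ω) - b * V ω) ∂μ = Real.log (b / a) := by
    rw [integral_sub hXint' (hVint.const_mul b), integral_add (integrable_const _)
      (hXint.const_mul a), integral_const_mul, integral_const_mul,
      integral_of_map_eq_expMeasure ha (by fun_prop) hXlaw,
      integral_of_map_eq_expMeasure hb hV.aemeasurable hVlaw, integral_const]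
    field_simp
    simp
  have hlogint :
      Integrable (fun p => Real.log (f p).toReal) (μ.map fun ω => (Y ω + V ω, Y ω)) :=
    (integrable_map_measure hlogf.aestronglyMeasurable hXY.aemeasurable).mpr
      ((hXint'.sub (hVint.const_mul b)).congr hlog.symm)
  rw [mutualInfo, hXlaw, hjoint, klDiv_withDensity (by fun_prop) (hjoint ▸ hlogint), ← hjoint,
    integral_map hXY.aemeasurable hlogf.aestronglyMeasurable, integral_congr_ae hlog, hmean]

end Construction

/-- Let V ~ Exp(mean P) be independent of Y, where Y has law
(P/λ)·δ₀ + (1 − P/λ)·Exp(mean λ), with 0 < P ≤ λ, and set X = Y + V. Then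
(i) 0 ≤ Y ≤ X a.s., (ii) E[X − Y] = P, (iii) X ~ Exp(mean λ), and (iv) I(X;Y) = ln(λ/P).
(Here `expMeasure r` is the exponential distribution with rate r, i.e. mean 1/r.) -/
theorem exponential_construction
    {Ω : Type*} [MeasurableSpace Ω] (μ : Measure Ω) [IsProbabilityMeasure μ]
    (lam P : ℝ) (hP : 0 < P) (hPlam : P ≤ lam)
    (Y V : Ω → ℝ) (hYmeas : Measurable Y) (hVmeas : Measurable V)
    (hIndep : IndepFun Y V μ)
    (hVlaw : μ.map V = ProbabilityTheory.expMeasure (1 / P))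
    (hYlaw : μ.map Y
      = (ENNReal.ofReal (P / lam)) • Measure.dirac (0 : ℝ)
        + (ENNReal.ofReal (1 - P / lam)) • ProbabilityTheory.expMeasure (1 / lam)) :
    (∀ᵐ ω ∂μ, 0 ≤ Y ω ∧ Y ω ≤ Y ω + V ω)
    ∧ (∫ ω, ((Y ω + V ω) - Y ω) ∂μ = P)
    ∧ (μ.map (fun ω => Y ω + V ω) = ProbabilityTheory.expMeasure (1 / lam))
    ∧ mutualInfo μ (fun ω => Y ω + V ω) Y = ENNReal.ofReal (Real.log (lam / P)) := by
  have hlam : 0 < lam := hP.trans_le hPlam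
  have hrates (x y : ℝ) : 1 / x / (1 / y) = y / x := by simp [div_eq_mul_inv, mul_comm]
  have hmix : μ.map Y = expMixture (1 / lam) (1 / P) := by
    rw [hYlaw, expMixture, hrates]
  have hY0 : ∀ᵐ y ∂μ.map Y, 0 ≤ y := hmix ▸ ae_nonneg_expMixture _ _
  have hV0 : ∀ᵐ v ∂μ.map V, 0 ≤ v := hVlaw ▸ ae_nonneg_expMeasure _
  have hXlaw := map_add_eq_expMeasure (by positivity) (one_div_le_one_div_of_le hP hPlam)
    hYmeas hVmeas hIndep hmix hVlaw
  refine ⟨?_, ?_, hXlaw, ?_⟩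
  · filter_upwards [ae_of_ae_map hYmeas.aemeasurable hY0,
      ae_of_ae_map hVmeas.aemeasurable hV0] with ω hy hv
    exact ⟨hy, by linarith⟩
  · simp_rw [add_sub_cancel_left]
    rw [integral_of_map_eq_expMeasure (by positivity) hVmeas.aemeasurable hVlaw, one_div_one_div]
  · rw [mutualInfo_add_eq_log (by positivity) (by positivity) hYmeas hVmeas hIndep hY0 hXlaw hVlaw,
      hrates]
end

section
/- Consider minimizing Σᵢ₌₁ᴺ max(ln(λᵢ/Pᵢ), 0) over P₁,…,P_N > 0 subject to Σᵢ Pᵢ ≤ P, where λ₁,…,λ_N > 0 and 0 < P ≤ Σᵢ λᵢ. The optimum is attained by the reverse waterfilling allocation Pᵢ* = min(λ, λᵢ), where λ > 0 is chosen so that Σᵢ min(λ, λᵢ) = P, and the minimum value equals Σᵢ max(ln(λᵢ/λ), 0). -/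
open Finset

lemma key_ineq (lam l x : ℝ) (hlam : 0 < lam) (hl : 0 < l) (hx : 0 < x) :
    max (Real.log (lam / l)) 0 + (min l lam - x) / l
      ≤ max (Real.log (lam / x)) 0 := by
  rcases le_or_gt lam l with h | h
  · have hmin : min l lam = lam := min_eq_right h
    have h0 : max (Real.log (lam / l)) 0 = 0 := by
      apply max_eq_right
      apply Real.log_nonpos
      · positivity
      · exact div_le_one_of_le₀ h hl.le
    rw [hmin, h0, zero_add]
    rcases le_or_gt lam x with h2 | h2
    · have : (lam - x) / l ≤ 0 := by
        apply div_nonpos_of_nonpos_of_nonneg <;> linarith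
      exact this.trans (le_max_right _ _)
    · have hlog : Real.log (x / lam) ≤ x / lam - 1 :=
        Real.log_le_sub_one_of_pos (by positivity)
      have hlog2 : 1 - x / lam ≤ Real.log (lam / x) := by
        rw [Real.log_div hlam.ne' hx.ne']
        rw [Real.log_div hx.ne' hlam.ne'] at hlog
        linarith
      have h3 : (lam - x) / l ≤ (lam - x) / lam := by
        apply div_le_div_of_nonneg_left (by linarith) hlam h
      calc (lam - x) / l ≤ (lam - x) / lam := h3
        _ = 1 - x / lam := by field_simp
        _ ≤ Real.log (lam / x) := hlog2
        _ ≤ max (Real.log (lam / x)) 0 := le_max_left _ _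
  · have hmin : min l lam = l := min_eq_left h.le
    have h0 : max (Real.log (lam / l)) 0 = Real.log (lam / l) := by
      apply max_eq_left
      apply Real.log_nonneg
      rw [le_div_iff₀ hl]; linarith
    have hlog : Real.log (x / l) ≤ x / l - 1 :=
      Real.log_le_sub_one_of_pos (by positivity)
    have hsplit : Real.log (lam / x) = Real.log (lam / l) + Real.log (l / x) := by
      rw [Real.log_div hlam.ne' hx.ne', Real.log_div hlam.ne' hl.ne',
        Real.log_div hl.ne' hx.ne']
      ring
    have hlog2 : 1 - x / l ≤ Real.log (l / x) := by
      rw [Real.log_div hl.ne' hx.ne']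
      rw [Real.log_div hx.ne' hl.ne'] at hlog
      linarith
    rw [hmin, h0]
    calc Real.log (lam / l) + (l - x) / l
        = Real.log (lam / l) + (1 - x / l) := by
          congr 1; field_simp
      _ ≤ Real.log (lam / l) + Real.log (l / x) := by linarith
      _ = Real.log (lam / x) := hsplit.symm
      _ ≤ max (Real.log (lam / x)) 0 := le_max_left _ _

/-- reverse waterfilling for exponential loads: minimizing
Σᵢ max(ln(λᵢ/Pᵢ), 0) over Pᵢ > 0 with Σᵢ Pᵢ ≤ P, where 0 < P ≤ Σᵢ λᵢ, is achieved by
Pᵢ* = min(l, λᵢ) where the water level l > 0 satisfies Σᵢ min(l, λᵢ) = P, and the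
optimal value is Σᵢ max(ln(λᵢ/l), 0). -/
theorem reverse_waterfilling_exponential
    (N : ℕ) (lam : Fin N → ℝ) (hlam : ∀ i, 0 < lam i)
    (P : ℝ) (hP : 0 < P) (hPle : P ≤ ∑ i, lam i)
    (l : ℝ) (hl : 0 < l) (hwater : ∑ i, min l (lam i) = P) :
    -- the allocation Pᵢ* = min(l, λᵢ) is feasible,
    ((∀ i, 0 < min l (lam i)) ∧ ∑ i, min l (lam i) ≤ P)
    -- its objective value equals Σᵢ max(ln(λᵢ/l), 0),
    ∧ (∑ i, max (Real.log (lam i / min l (lam i))) 0 = ∑ i, max (Real.log (lam i / l)) 0)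
    -- and it is optimal: every feasible allocation has a larger or equal objective.
    ∧ (∀ Q : Fin N → ℝ, (∀ i, 0 < Q i) → ∑ i, Q i ≤ P →
        ∑ i, max (Real.log (lam i / l)) 0 ≤ ∑ i, max (Real.log (lam i / Q i)) 0) := by
  refine ⟨⟨fun i => lt_min hl (hlam i), hwater.le⟩, ?_, ?_⟩
  · apply Finset.sum_congr rfl
    intro i _
    rcases le_or_gt (lam i) l with h | h
    · rw [min_eq_right h, div_self (hlam i).ne']
      rw [Real.log_one]
      rw [max_self]
      symm
      apply max_eq_right
      apply Real.log_nonpos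
      · have := hlam i; positivity
      · exact div_le_one_of_le₀ h hl.le
    · rw [min_eq_left h.le]
  · intro Q hQ hQsum
    have key : ∀ i ∈ Finset.univ (α := Fin N),
        max (Real.log (lam i / l)) 0 + (min l (lam i) - Q i) / l
          ≤ max (Real.log (lam i / Q i)) 0 :=
      fun i _ => key_ineq (lam i) l (Q i) (hlam i) hl (hQ i)
    have hsum := Finset.sum_le_sum key
    rw [Finset.sum_add_distrib, ← Finset.sum_div, Finset.sum_sub_distrib, hwater] at hsum
    have : 0 ≤ (P - ∑ i, Q i) / l := by
      apply div_nonneg _ hl.le; linarith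
    linarith
end

section
/- Consider minimizing Σᵢ₌₁ᴺ max(hᵢ − ln Pᵢ, 0) over P₁,…,P_N > 0 subject to Σᵢ Pᵢ ≤ P, where h₁,…,h_N ∈ ℝ and 0 < P ≤ Σᵢ e^{hᵢ}. The minimum is attained at Pᵢ* = min(λ, e^{hᵢ}) with λ > 0 chosen so that Σᵢ min(λ, e^{hᵢ}) = P, and the optimal value is Σᵢ max(hᵢ − ln λ, 0). -/
open Finset

lemma key_slb (a l Q : ℝ) (hl : 0 < l) (hQ : 0 < Q) :
    max (a - Real.log l) 0 - (Q - min l (Real.exp a)) / l ≤ max (a - Real.log Q) 0 := by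
  rcases le_or_gt l (Real.exp a) with hle | hlt
  · have hmin : min l (Real.exp a) = l := min_eq_left hle
    have hla : Real.log l ≤ a := by
      have := Real.log_le_log hl hle
      simpa [Real.log_exp] using this
    have hmaxl : max (a - Real.log l) 0 = a - Real.log l := max_eq_left (by linarith)
    have hlog : Real.log (Q / l) ≤ Q / l - 1 := Real.log_le_sub_one_of_pos (div_pos hQ hl)
    have hlog' : Real.log Q - Real.log l ≤ Q / l - 1 := by
      rwa [Real.log_div (ne_of_gt hQ) (ne_of_gt hl)] at hlog
    have : a - Real.log l - (Q - l) / l ≤ a - Real.log Q := by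
      have hQl : (Q - l) / l = Q / l - 1 := by field_simp
      rw [hQl]; linarith
    calc max (a - Real.log l) 0 - (Q - min l (Real.exp a)) / l
        = a - Real.log l - (Q - l) / l := by rw [hmaxl, hmin]
      _ ≤ a - Real.log Q := this
      _ ≤ max (a - Real.log Q) 0 := le_max_left _ _
  · have hmin : min l (Real.exp a) = Real.exp a := min_eq_right hlt.le
    have hal : a < Real.log l := by
      have := Real.log_lt_log (Real.exp_pos a) hlt
      simpa [Real.log_exp] using this
    have hmaxl : max (a - Real.log l) 0 = 0 := max_eq_right (by linarith)
    rw [hmaxl, hmin, zero_sub]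
    rcases le_or_gt (Real.exp a) Q with hQa | hQa
    · have : -((Q - Real.exp a) / l) ≤ 0 := by
        have : 0 ≤ (Q - Real.exp a) / l := div_nonneg (by linarith) hl.le
        linarith
      exact this.trans (le_max_right _ _)
    · have hea : (0:ℝ) < Real.exp a := Real.exp_pos a
      have h1 : (Real.exp a - Q) / l ≤ (Real.exp a - Q) / Real.exp a :=
        div_le_div_of_nonneg_left (by linarith) hea hlt.le
      have hlog : Real.log (Q / Real.exp a) ≤ Q / Real.exp a - 1 :=
        Real.log_le_sub_one_of_pos (div_pos hQ hea)
      have hlog' : Real.log Q - a ≤ Q / Real.exp a - 1 := by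
        rwa [Real.log_div (ne_of_gt hQ) (ne_of_gt hea), Real.log_exp] at hlog
      have h2 : (Real.exp a - Q) / Real.exp a = 1 - Q / Real.exp a := by field_simp
      have h3 : (Real.exp a - Q) / l ≤ a - Real.log Q := by
        rw [h2] at h1; linarith
      have : -((Q - Real.exp a) / l) = (Real.exp a - Q) / l := by ring
      rw [this]
      exact h3.trans (le_max_left _ _)

/-- waterfilling for Shannon-lower-bound objectives: minimizing
Σᵢ max(hᵢ − ln Pᵢ, 0) over Pᵢ > 0 with Σᵢ Pᵢ ≤ P, where 0 < P ≤ Σᵢ e^{hᵢ}, is achieved by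
Pᵢ* = min(l, e^{hᵢ}) with l > 0 chosen so that Σᵢ min(l, e^{hᵢ}) = P, and the optimal
value is Σᵢ max(hᵢ − ln l, 0). -/
theorem waterfilling_slb
    (N : ℕ) (h : Fin N → ℝ)
    (P : ℝ) (hP : 0 < P) (hPle : P ≤ ∑ i, Real.exp (h i))
    (l : ℝ) (hl : 0 < l) (hwater : ∑ i, min l (Real.exp (h i)) = P) :
    -- the allocation Pᵢ* = min(l, e^{hᵢ}) is feasible,
    ((∀ i, 0 < min l (Real.exp (h i))) ∧ ∑ i, min l (Real.exp (h i)) ≤ P)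
    -- its objective value equals Σᵢ max(hᵢ − ln l, 0),
    ∧ (∑ i, max (h i - Real.log (min l (Real.exp (h i)))) 0
        = ∑ i, max (h i - Real.log l) 0)
    -- and it is optimal among all feasible allocations.
    ∧ (∀ Q : Fin N → ℝ, (∀ i, 0 < Q i) → ∑ i, Q i ≤ P →
        ∑ i, max (h i - Real.log l) 0 ≤ ∑ i, max (h i - Real.log (Q i)) 0) := by
  refine ⟨⟨fun i => lt_min hl (Real.exp_pos _), le_of_eq hwater⟩, ?_, ?_⟩
  · refine Finset.sum_congr rfl fun i _ => ?_
    rcases le_or_gt l (Real.exp (h i)) with hle | hlt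
    · rw [min_eq_left hle]
    · have hal : h i < Real.log l := by
        have := Real.log_lt_log (Real.exp_pos (h i)) hlt
        simpa [Real.log_exp] using this
      rw [min_eq_right hlt.le, Real.log_exp]
      rw [max_eq_right (by linarith), max_eq_right (by linarith)]
  · intro Q hQ hQsum
    have hkey : ∀ i ∈ Finset.univ (α := Fin N),
        max (h i - Real.log l) 0 - (Q i - min l (Real.exp (h i))) / l
          ≤ max (h i - Real.log (Q i)) 0 :=
      fun i _ => key_slb (h i) l (Q i) hl (hQ i)
    have hsum := Finset.sum_le_sum hkey
    rw [Finset.sum_sub_distrib] at hsum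
    have hdiff : ∑ i, (Q i - min l (Real.exp (h i))) / l ≤ 0 := by
      rw [← Finset.sum_div, Finset.sum_sub_distrib, hwater]
      exact div_nonpos_of_nonpos_of_nonneg (by linarith) hl.le
    linarith
end
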